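/- arXiv:2506.09624 — 9 statements merged into one kernel-verified Lean document; each statement's English description precedes it below -/
import Mathlib

section
/- Under the ios-ORP assumption (ios₀ ⊆ ios₁), if μ(ios₀) > 0 then for every t ∈ [0,1] the untreated arm of the FICE is point identified: μ({T1₀ ≤ t} | ios) = μ(T1₀ ≤ t) / μ(ios₀). -/
open MeasureTheory Set

/-- Elementary conditional probability `μ(E|F) = μ(E ∩ F)/μ(F)`. -/
noncomputable def condProbR {Ω : Type*} [MeasurableSpace Ω] (μ : Measure Ω)
    (E F : Set Ω) : ℝ :=
  (μ (E ∩ F)).toReal / (μ F).toReal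

/-- Under ios-ORP (`ios₀ ⊆ ios₁`), if `μ(ios₀) > 0` then for every `t ∈ [0,1]`,
the untreated arm of the FICE is point identified:
`μ({T1₀ ≤ t} | ios) = μ(T1₀ ≤ t) / μ(ios₀)`, where `ios = ios₀ ∩ ios₁`. -/
theorem untreated_arm_identified_under_ios_orp
    {Ω : Type*} [MeasurableSpace Ω] (μ : Measure Ω) [IsProbabilityMeasure μ]
    (T1₀ T2₀ T1₁ T2₁ : Ω → ℝ)
    (hT1₀ : Measurable T1₀) (hT2₀ : Measurable T2₀)
    (hT1₁ : Measurable T1₁) (hT2₁ : Measurable T2₁)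
    (hiosORP : ({ω | T1₀ ω ≤ 1} ∪ {ω | (1:ℝ) < T2₀ ω})
        ⊆ ({ω | T1₁ ω ≤ 1} ∪ {ω | (1:ℝ) < T2₁ ω}))
    (hpos : 0 < μ ({ω | T1₀ ω ≤ 1} ∪ {ω | (1:ℝ) < T2₀ ω}))
    (t : ℝ) (ht0 : 0 ≤ t) (ht1 : t ≤ 1) :
    condProbR μ {ω | T1₀ ω ≤ t}
        (({ω | T1₀ ω ≤ 1} ∪ {ω | (1:ℝ) < T2₀ ω})
          ∩ ({ω | T1₁ ω ≤ 1} ∪ {ω | (1:ℝ) < T2₁ ω}))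
      = (μ {ω | T1₀ ω ≤ t}).toReal
        / (μ ({ω | T1₀ ω ≤ 1} ∪ {ω | (1:ℝ) < T2₀ ω})).toReal := by
  have h1 : (({ω | T1₀ ω ≤ 1} ∪ {ω | (1:ℝ) < T2₀ ω})
      ∩ ({ω | T1₁ ω ≤ 1} ∪ {ω | (1:ℝ) < T2₁ ω}))
      = ({ω | T1₀ ω ≤ 1} ∪ {ω | (1:ℝ) < T2₀ ω}) :=
    inter_eq_left.mpr hiosORP
  have h2 : {ω | T1₀ ω ≤ t} ∩ ({ω | T1₀ ω ≤ 1} ∪ {ω | (1:ℝ) < T2₀ ω})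
      = {ω | T1₀ ω ≤ t} := by
    apply inter_eq_left.mpr
    intro ω hω
    exact Or.inl (le_trans hω ht1)
  rw [condProbR, h1, h2]
end

section
/- (Proposition 1.) Under the ios-ORP assumption (ios₀ ⊆ ios₁), if π := μ(ios₀) > 0 then for every t ∈ [0,1] the FICE is bounded as L(t) ≤ FICE(t) ≤ U(t), where U(t) = min{1, μ(T1₁ ≤ t)/π} − μ(T1₀ ≤ t)/π and L(t) = max{0, 1 − μ(T1₁ > t)/π} − μ(T1₀ ≤ t)/π. -/
/-!
Under ios-ORP the stratum `ios₀ ∩ ios₁` is just `ios₀`, and for `t ≤ 1` it contains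
`{T1₀ ≤ t}`, so the control term of the FICE is exactly `μ(T1₀ ≤ t)/π`. The treated term
`μ({T1₁ ≤ t} ∩ ios₀)/π` is only partially identified; the Fréchet bounds
`max 0 (μ ios₀ - μ {T1₁ > t}) ≤ μ({T1₁ ≤ t} ∩ ios₀) ≤ min (μ ios₀) (μ {T1₁ ≤ t})`
give the two sides.
-/

open MeasureTheory Set

section

variable {Ω : Type*} [MeasurableSpace Ω] {μ : Measure Ω} {E F : Set Ω}

theorem condProbR_of_subset (h : E ⊆ F) :
    condProbR μ E F = (μ E).toReal / (μ F).toReal := by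
  rw [condProbR, inter_eq_left.mpr h]

variable [IsFiniteMeasure μ]

theorem condProbR_le_min_one_div :
    condProbR μ E F ≤ min 1 ((μ E).toReal / (μ F).toReal) := by
  have hF : 0 ≤ (μ F).toReal := ENNReal.toReal_nonneg
  refine le_min (div_le_one_of_le₀ ?_ hF) (div_le_div_of_nonneg_right ?_ hF)
  · exact measureReal_mono inter_subset_right
  · exact measureReal_mono inter_subset_left

theorem max_zero_one_sub_div_le_condProbR (hF : 0 < (μ F).toReal) :
    max 0 (1 - (μ Eᶜ).toReal / (μ F).toReal) ≤ condProbR μ E F := by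
  refine max_le (div_nonneg ENNReal.toReal_nonneg hF.le) ?_
  have hcover : (μ F).toReal ≤ (μ (E ∩ F)).toReal + (μ Eᶜ).toReal := by
    calc (μ F).toReal ≤ (μ ((E ∩ F) ∪ Eᶜ)).toReal :=
          measureReal_mono fun ω hω => (em (ω ∈ E)).imp (fun hE => ⟨hE, hω⟩) id
      _ ≤ (μ (E ∩ F)).toReal + (μ Eᶜ).toReal := measureReal_union_le _ _
  rw [condProbR, sub_le_iff_le_add, ← add_div, le_div_iff₀ hF, one_mul]
  linarith

end

theorem FICE_bounds_ios_orp_general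
    {Ω : Type*} [MeasurableSpace Ω] (μ : Measure Ω) [IsProbabilityMeasure μ]
    (T1₀ T2₀ T1₁ T2₁ : Ω → ℝ)
    (hiosORP : ({ω | T1₀ ω ≤ 1} ∪ {ω | (1:ℝ) < T2₀ ω})
        ⊆ ({ω | T1₁ ω ≤ 1} ∪ {ω | (1:ℝ) < T2₁ ω}))
    (hpos : 0 < (μ ({ω | T1₀ ω ≤ 1} ∪ {ω | (1:ℝ) < T2₀ ω})).toReal)
    (t : ℝ) (ht1 : t ≤ 1) :
    (max 0 (1 - (μ {ω | t < T1₁ ω}).toReal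
          / (μ ({ω | T1₀ ω ≤ 1} ∪ {ω | (1:ℝ) < T2₀ ω})).toReal)
        - (μ {ω | T1₀ ω ≤ t}).toReal
          / (μ ({ω | T1₀ ω ≤ 1} ∪ {ω | (1:ℝ) < T2₀ ω})).toReal
      ≤ condProbR μ {ω | T1₁ ω ≤ t}
          (({ω | T1₀ ω ≤ 1} ∪ {ω | (1:ℝ) < T2₀ ω})
            ∩ ({ω | T1₁ ω ≤ 1} ∪ {ω | (1:ℝ) < T2₁ ω}))
        - condProbR μ {ω | T1₀ ω ≤ t}
          (({ω | T1₀ ω ≤ 1} ∪ {ω | (1:ℝ) < T2₀ ω})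
            ∩ ({ω | T1₁ ω ≤ 1} ∪ {ω | (1:ℝ) < T2₁ ω}))) ∧
    (condProbR μ {ω | T1₁ ω ≤ t}
          (({ω | T1₀ ω ≤ 1} ∪ {ω | (1:ℝ) < T2₀ ω})
            ∩ ({ω | T1₁ ω ≤ 1} ∪ {ω | (1:ℝ) < T2₁ ω}))
        - condProbR μ {ω | T1₀ ω ≤ t}
          (({ω | T1₀ ω ≤ 1} ∪ {ω | (1:ℝ) < T2₀ ω})
            ∩ ({ω | T1₁ ω ≤ 1} ∪ {ω | (1:ℝ) < T2₁ ω}))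
      ≤ min 1 ((μ {ω | T1₁ ω ≤ t}).toReal
          / (μ ({ω | T1₀ ω ≤ 1} ∪ {ω | (1:ℝ) < T2₀ ω})).toReal)
        - (μ {ω | T1₀ ω ≤ t}).toReal
          / (μ ({ω | T1₀ ω ≤ 1} ∪ {ω | (1:ℝ) < T2₀ ω})).toReal) := by
  have hcontrol : {ω | T1₀ ω ≤ t} ⊆ {ω | T1₀ ω ≤ 1} ∪ {ω | (1:ℝ) < T2₀ ω} :=
    fun ω hω => Or.inl (le_trans hω ht1)
  have hsurvival : {ω | t < T1₁ ω} = {ω | T1₁ ω ≤ t}ᶜ := by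
    ext ω; simp
  rw [inter_eq_left.mpr hiosORP, condProbR_of_subset hcontrol, hsurvival]
  exact ⟨sub_le_sub_right (max_zero_one_sub_div_le_condProbR hpos) _,
    sub_le_sub_right condProbR_le_min_one_div _⟩

/-- Proposition 1: under ios-ORP (`ios₀ ⊆ ios₁`), with `π := μ(ios₀) > 0`, for every
`t ∈ [0,1]` the FICE is bounded by `L(t) ≤ FICE(t) ≤ U(t)`, where
`U(t) = min{1, μ(T1₁ ≤ t)/π} − μ(T1₀ ≤ t)/π` and
`L(t) = max{0, 1 − μ(T1₁ > t)/π} − μ(T1₀ ≤ t)/π`. -/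
theorem FICE_bounds_ios_orp
    {Ω : Type*} [MeasurableSpace Ω] (μ : Measure Ω) [IsProbabilityMeasure μ]
    (T1₀ T2₀ T1₁ T2₁ : Ω → ℝ)
    (hT1₀ : Measurable T1₀) (hT2₀ : Measurable T2₀)
    (hT1₁ : Measurable T1₁) (hT2₁ : Measurable T2₁)
    (hiosORP : ({ω | T1₀ ω ≤ 1} ∪ {ω | (1:ℝ) < T2₀ ω})
        ⊆ ({ω | T1₁ ω ≤ 1} ∪ {ω | (1:ℝ) < T2₁ ω}))
    (hpos : 0 < (μ ({ω | T1₀ ω ≤ 1} ∪ {ω | (1:ℝ) < T2₀ ω})).toReal)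
    (t : ℝ) (ht0 : 0 ≤ t) (ht1 : t ≤ 1) :
    (max 0 (1 - (μ {ω | t < T1₁ ω}).toReal
          / (μ ({ω | T1₀ ω ≤ 1} ∪ {ω | (1:ℝ) < T2₀ ω})).toReal)
        - (μ {ω | T1₀ ω ≤ t}).toReal
          / (μ ({ω | T1₀ ω ≤ 1} ∪ {ω | (1:ℝ) < T2₀ ω})).toReal
      ≤ condProbR μ {ω | T1₁ ω ≤ t}
          (({ω | T1₀ ω ≤ 1} ∪ {ω | (1:ℝ) < T2₀ ω})
            ∩ ({ω | T1₁ ω ≤ 1} ∪ {ω | (1:ℝ) < T2₁ ω}))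
        - condProbR μ {ω | T1₀ ω ≤ t}
          (({ω | T1₀ ω ≤ 1} ∪ {ω | (1:ℝ) < T2₀ ω})
            ∩ ({ω | T1₁ ω ≤ 1} ∪ {ω | (1:ℝ) < T2₁ ω}))) ∧
    (condProbR μ {ω | T1₁ ω ≤ t}
          (({ω | T1₀ ω ≤ 1} ∪ {ω | (1:ℝ) < T2₀ ω})
            ∩ ({ω | T1₁ ω ≤ 1} ∪ {ω | (1:ℝ) < T2₁ ω}))
        - condProbR μ {ω | T1₀ ω ≤ t}
          (({ω | T1₀ ω ≤ 1} ∪ {ω | (1:ℝ) < T2₀ ω})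
            ∩ ({ω | T1₁ ω ≤ 1} ∪ {ω | (1:ℝ) < T2₁ ω}))
      ≤ min 1 ((μ {ω | T1₁ ω ≤ t}).toReal
          / (μ ({ω | T1₀ ω ≤ 1} ∪ {ω | (1:ℝ) < T2₀ ω})).toReal)
        - (μ {ω | T1₀ ω ≤ t}).toReal
          / (μ ({ω | T1₀ ω ≤ 1} ∪ {ω | (1:ℝ) < T2₀ ω})).toReal) :=
  FICE_bounds_ios_orp_general μ T1₀ T2₀ T1₁ T2₁ hiosORP hpos t ht1
end

section
/- Under the ios-ORP assumption (ios₀ ⊆ ios₁) with π := μ(ios₀) > 0, let U(t) = min{1, μ(T1₁ ≤ t)/π} − μ(T1₀ ≤ t)/π and L(t) = max{0, 1 − μ(T1₁ > t)/π} − μ(T1₀ ≤ t)/π be the Proposition 1 bounds. If t ∈ [0,1] satisfies 1 − π < μ(T1₁ ≤ t) < π, then U(t) − L(t) = 1/π − 1; moreover, the condition 1 − π < μ(T1₁ ≤ t) < π can hold only if π > 1/2. -/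
open MeasureTheory Set

/-- Under ios-ORP with `π := μ(ios₀) > 0`, if `t ∈ [0,1]` satisfies
`1 − π < μ(T1₁ ≤ t) < π`, then the Proposition 1 bounds
`U(t) = min{1, μ(T1₁ ≤ t)/π} − μ(T1₀ ≤ t)/π` and
`L(t) = max{0, 1 − μ(T1₁ > t)/π} − μ(T1₀ ≤ t)/π`
satisfy `U(t) − L(t) = 1/π − 1`; moreover the condition forces `π > 1/2`. -/
theorem FICE_bounds_length_ios_orp
    {Ω : Type*} [MeasurableSpace Ω] (μ : Measure Ω) [IsProbabilityMeasure μ]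
    (T1₀ T2₀ T1₁ T2₁ : Ω → ℝ)
    (hT1₀ : Measurable T1₀) (hT2₀ : Measurable T2₀)
    (hT1₁ : Measurable T1₁) (hT2₁ : Measurable T2₁)
    (hiosORP : ({ω | T1₀ ω ≤ 1} ∪ {ω | (1:ℝ) < T2₀ ω})
        ⊆ ({ω | T1₁ ω ≤ 1} ∪ {ω | (1:ℝ) < T2₁ ω}))
    (hpos : 0 < (μ ({ω | T1₀ ω ≤ 1} ∪ {ω | (1:ℝ) < T2₀ ω})).toReal)
    (t : ℝ) (ht0 : 0 ≤ t) (ht1 : t ≤ 1)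
    (hlow : 1 - (μ ({ω | T1₀ ω ≤ 1} ∪ {ω | (1:ℝ) < T2₀ ω})).toReal
        < (μ {ω | T1₁ ω ≤ t}).toReal)
    (hhigh : (μ {ω | T1₁ ω ≤ t}).toReal
        < (μ ({ω | T1₀ ω ≤ 1} ∪ {ω | (1:ℝ) < T2₀ ω})).toReal) :
    ((min 1 ((μ {ω | T1₁ ω ≤ t}).toReal
          / (μ ({ω | T1₀ ω ≤ 1} ∪ {ω | (1:ℝ) < T2₀ ω})).toReal)
        - (μ {ω | T1₀ ω ≤ t}).toReal
          / (μ ({ω | T1₀ ω ≤ 1} ∪ {ω | (1:ℝ) < T2₀ ω})).toReal)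
      - (max 0 (1 - (μ {ω | t < T1₁ ω}).toReal
          / (μ ({ω | T1₀ ω ≤ 1} ∪ {ω | (1:ℝ) < T2₀ ω})).toReal)
        - (μ {ω | T1₀ ω ≤ t}).toReal
          / (μ ({ω | T1₀ ω ≤ 1} ∪ {ω | (1:ℝ) < T2₀ ω})).toReal)
      = 1 / (μ ({ω | T1₀ ω ≤ 1} ∪ {ω | (1:ℝ) < T2₀ ω})).toReal - 1) ∧
    (1 / 2 < (μ ({ω | T1₀ ω ≤ 1} ∪ {ω | (1:ℝ) < T2₀ ω})).toReal) := by
  set π := (μ ({ω | T1₀ ω ≤ 1} ∪ {ω | (1:ℝ) < T2₀ ω})).toReal with hπ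
  set q := (μ {ω | T1₁ ω ≤ t}).toReal with hq
  have hcompl : {ω | t < T1₁ ω} = {ω | T1₁ ω ≤ t}ᶜ := by
    ext ω; simp [not_le]
  have hms : MeasurableSet {ω | T1₁ ω ≤ t} := measurableSet_le hT1₁ measurable_const
  have hp : (μ {ω | t < T1₁ ω}).toReal = 1 - q := by
    rw [hcompl, prob_compl_eq_one_sub hms,
      ENNReal.toReal_sub_of_le prob_le_one (by simp)]
    simp [hq]
  have hπ1 : π ≤ 1 := by
    simpa using ENNReal.toReal_mono (by simp) (prob_le_one (μ := μ)
      (s := {ω | T1₀ ω ≤ 1} ∪ {ω | (1:ℝ) < T2₀ ω}))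
  have hmin : min 1 (q / π) = q / π := by
    apply min_eq_right
    rw [div_le_one hpos]
    exact hhigh.le
  have hmax : max 0 (1 - (1 - q) / π) = 1 - (1 - q) / π := by
    apply max_eq_right
    have : (1 - q) / π < 1 := by
      rw [div_lt_one hpos]; linarith
    linarith
  constructor
  · rw [hp, hmin, hmax]
    field_simp
    ring
  · linarith
end

section
/- (Lemma A5.) Under the weak-ORP assumption ({T1₀ ≤ 1} ⊆ ios₁), the proportion μ(ios) of the infected-or-survivors stratum is bounded by max{μ(T1₀ ≤ 1), μ(ios₀) + μ(ios₁) − 1} ≤ μ(ios) ≤ min{μ(ios₀), μ(ios₁) + μ({T1₀ ≤ 1} ∩ {T2₀ ≤ 1})}. -/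
open MeasureTheory Set

/-- Lemma A5: under weak-ORP (`{T1₀ ≤ 1} ⊆ ios₁`), the proportion `μ(ios)` of the
infected-or-survivors stratum `ios = ios₀ ∩ ios₁` is bounded by
`max{μ(T1₀ ≤ 1), μ(ios₀) + μ(ios₁) − 1} ≤ μ(ios)
  ≤ min{μ(ios₀), μ(ios₁) + μ({T1₀ ≤ 1} ∩ {T2₀ ≤ 1})}`. -/
theorem pi_ios_bounds_weak_orp
    {Ω : Type*} [MeasurableSpace Ω] (μ : Measure Ω) [IsProbabilityMeasure μ]
    (T1₀ T2₀ T1₁ T2₁ : Ω → ℝ)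
    (hT1₀ : Measurable T1₀) (hT2₀ : Measurable T2₀)
    (hT1₁ : Measurable T1₁) (hT2₁ : Measurable T2₁)
    (hweakORP : {ω | T1₀ ω ≤ 1} ⊆ ({ω | T1₁ ω ≤ 1} ∪ {ω | (1:ℝ) < T2₁ ω})) :
    (max (μ {ω | T1₀ ω ≤ 1}).toReal
        ((μ ({ω | T1₀ ω ≤ 1} ∪ {ω | (1:ℝ) < T2₀ ω})).toReal
          + (μ ({ω | T1₁ ω ≤ 1} ∪ {ω | (1:ℝ) < T2₁ ω})).toReal - 1)
      ≤ (μ (({ω | T1₀ ω ≤ 1} ∪ {ω | (1:ℝ) < T2₀ ω})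
          ∩ ({ω | T1₁ ω ≤ 1} ∪ {ω | (1:ℝ) < T2₁ ω}))).toReal) ∧
    ((μ (({ω | T1₀ ω ≤ 1} ∪ {ω | (1:ℝ) < T2₀ ω})
          ∩ ({ω | T1₁ ω ≤ 1} ∪ {ω | (1:ℝ) < T2₁ ω}))).toReal
      ≤ min (μ ({ω | T1₀ ω ≤ 1} ∪ {ω | (1:ℝ) < T2₀ ω})).toReal
        ((μ ({ω | T1₁ ω ≤ 1} ∪ {ω | (1:ℝ) < T2₁ ω})).toReal
          + (μ ({ω | T1₀ ω ≤ 1} ∩ {ω | T2₀ ω ≤ 1})).toReal)) := by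
  set A := ({ω | T1₀ ω ≤ 1} ∪ {ω | (1:ℝ) < T2₀ ω}) with hAdef
  set B := ({ω | T1₁ ω ≤ 1} ∪ {ω | (1:ℝ) < T2₁ ω}) with hBdef
  have hB : MeasurableSet B :=
    (measurableSet_le hT1₁ measurable_const).union
      (measurableSet_lt measurable_const hT2₁)
  have hsub : {ω | T1₀ ω ≤ 1} ⊆ A ∩ B :=
    subset_inter (subset_union_left) hweakORP
  have key : μ (A ∪ B) + μ (A ∩ B) = μ A + μ B := measure_union_add_inter A hB
  have keyR : (μ (A ∪ B)).toReal + (μ (A ∩ B)).toReal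
      = (μ A).toReal + (μ B).toReal := by
    rw [← ENNReal.toReal_add (measure_ne_top μ _) (measure_ne_top μ _),
      ← ENNReal.toReal_add (measure_ne_top μ _) (measure_ne_top μ _), key]
  have hUle : (μ (A ∪ B)).toReal ≤ 1 := by
    have := prob_le_one (μ := μ) (s := A ∪ B)
    simpa using ENNReal.toReal_le_toReal (measure_ne_top μ _) (by simp) |>.mpr this
  have hmono : ∀ {s t : Set Ω}, s ⊆ t → (μ s).toReal ≤ (μ t).toReal := fun h =>
    ENNReal.toReal_le_toReal (measure_ne_top μ _) (measure_ne_top μ _) |>.mpr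
      (measure_mono h)
  refine ⟨max_le (hmono hsub) (by linarith), le_min (hmono inter_subset_left) ?_⟩
  have h1 : (μ (A ∩ B)).toReal ≤ (μ B).toReal := hmono inter_subset_right
  have h2 : (0:ℝ) ≤ (μ ({ω | T1₀ ω ≤ 1} ∩ {ω | T2₀ ω ≤ 1})).toReal :=
    ENNReal.toReal_nonneg
  linarith
end

section
/- (Proposition 2.) Under the weak-ORP assumption ({T1₀ ≤ 1} ⊆ ios₁), define for t ∈ [0,1]: ũ(t) = min{μ(T1₁ ≤ t), μ(ios₀)} − μ(T1₀ ≤ t), l̃(t) = max{0, μ(ios₀) − μ(T1₁ > t)} − μ(T1₀ ≤ t), L̃π = max{μ(T1₀ ≤ 1), μ(ios₀) + μ(ios₁) − 1}, and Ũπ = min{μ(ios₀), μ(ios₁) + μ({T1₀ ≤ 1} ∩ {T2₀ ≤ 1})}. If L̃π > 0, then FICE(t) ≤ ũ(t)/L̃π when ũ(t) ≥ 0 and FICE(t) ≤ ũ(t)/Ũπ when ũ(t) < 0; and FICE(t) ≥ l̃(t)/Ũπ when l̃(t) ≥ 0 and FICE(t) ≥ l̃(t)/L̃π when l̃(t) <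 0. -/
open MeasureTheory Set

/-- `ios = {T1 ≤ 1} ∪ {T2 > 1}`, the infected-or-survivor event. -/
def iosEv {Ω : Type*} (T1 T2 : Ω → ℝ) : Set Ω :=
  {ω | T1 ω ≤ 1} ∪ {ω | (1:ℝ) < T2 ω}

/-- `FICE(t) = μ({T1₁ ≤ t} | ios) − μ({T1₀ ≤ t} | ios)` with `ios = ios₀ ∩ ios₁`. -/
noncomputable def FICE {Ω : Type*} [MeasurableSpace Ω] (μ : Measure Ω)
    (T1₀ T2₀ T1₁ T2₁ : Ω → ℝ) (t : ℝ) : ℝ :=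
  condProbR μ {ω | T1₁ ω ≤ t} (iosEv T1₀ T2₀ ∩ iosEv T1₁ T2₁)
    - condProbR μ {ω | T1₀ ω ≤ t} (iosEv T1₀ T2₀ ∩ iosEv T1₁ T2₁)

/-- `ũ(t) = min{μ(T1₁ ≤ t), μ(ios₀)} − μ(T1₀ ≤ t)`. -/
noncomputable def uTilde {Ω : Type*} [MeasurableSpace Ω] (μ : Measure Ω)
    (T1₀ T2₀ T1₁ : Ω → ℝ) (t : ℝ) : ℝ :=
  min (μ {ω | T1₁ ω ≤ t}).toReal (μ (iosEv T1₀ T2₀)).toReal - (μ {ω | T1₀ ω ≤ t}).toReal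

/-- `l̃(t) = max{0, μ(ios₀) − μ(T1₁ > t)} − μ(T1₀ ≤ t)`. -/
noncomputable def lTilde {Ω : Type*} [MeasurableSpace Ω] (μ : Measure Ω)
    (T1₀ T2₀ T1₁ : Ω → ℝ) (t : ℝ) : ℝ :=
  max 0 ((μ (iosEv T1₀ T2₀)).toReal - (μ {ω | t < T1₁ ω}).toReal)
    - (μ {ω | T1₀ ω ≤ t}).toReal

/-- `L̃π = max{μ(T1₀ ≤ 1), μ(ios₀) + μ(ios₁) − 1}`. -/
noncomputable def LPiTilde {Ω : Type*} [MeasurableSpace Ω] (μ : Measure Ω)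
    (T1₀ T2₀ T1₁ T2₁ : Ω → ℝ) : ℝ :=
  max (μ {ω | T1₀ ω ≤ 1}).toReal
    ((μ (iosEv T1₀ T2₀)).toReal + (μ (iosEv T1₁ T2₁)).toReal - 1)

/-- `Ũπ = min{μ(ios₀), μ(ios₁) + μ({T1₀ ≤ 1} ∩ {T2₀ ≤ 1})}`. -/
noncomputable def UPiTilde {Ω : Type*} [MeasurableSpace Ω] (μ : Measure Ω)
    (T1₀ T2₀ T1₁ T2₁ : Ω → ℝ) : ℝ :=
  min (μ (iosEv T1₀ T2₀)).toReal
    ((μ (iosEv T1₁ T2₁)).toReal + (μ ({ω | T1₀ ω ≤ 1} ∩ {ω | T2₀ ω ≤ 1})).toReal)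

/-- Proposition 2: FICE bounds under weak-ORP. -/
theorem FICE_bounds_weak_orp
    {Ω : Type*} [MeasurableSpace Ω] (μ : Measure Ω) [IsProbabilityMeasure μ]
    (T1₀ T2₀ T1₁ T2₁ : Ω → ℝ)
    (hT1₀ : Measurable T1₀) (hT2₀ : Measurable T2₀)
    (hT1₁ : Measurable T1₁) (hT2₁ : Measurable T2₁)
    (hweakORP : {ω | T1₀ ω ≤ 1} ⊆ iosEv T1₁ T2₁)
    (t : ℝ) (ht0 : 0 ≤ t) (ht1 : t ≤ 1)
    (hLpos : 0 < LPiTilde μ T1₀ T2₀ T1₁ T2₁) :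
    (0 ≤ uTilde μ T1₀ T2₀ T1₁ t →
      FICE μ T1₀ T2₀ T1₁ T2₁ t ≤ uTilde μ T1₀ T2₀ T1₁ t / LPiTilde μ T1₀ T2₀ T1₁ T2₁) ∧
    (uTilde μ T1₀ T2₀ T1₁ t < 0 →
      FICE μ T1₀ T2₀ T1₁ T2₁ t ≤ uTilde μ T1₀ T2₀ T1₁ t / UPiTilde μ T1₀ T2₀ T1₁ T2₁) ∧
    (0 ≤ lTilde μ T1₀ T2₀ T1₁ t →
      lTilde μ T1₀ T2₀ T1₁ t / UPiTilde μ T1₀ T2₀ T1₁ T2₁ ≤ FICE μ T1₀ T2₀ T1₁ T2₁ t) ∧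
    (lTilde μ T1₀ T2₀ T1₁ t < 0 →
      lTilde μ T1₀ T2₀ T1₁ t / LPiTilde μ T1₀ T2₀ T1₁ T2₁ ≤ FICE μ T1₀ T2₀ T1₁ T2₁ t) := by
  classical
  set I0 := iosEv T1₀ T2₀ with hI0def
  set I1 := iosEv T1₁ T2₁ with hI1def
  set S := I0 ∩ I1 with hSdef
  set A0 : Set Ω := {ω | T1₀ ω ≤ t} with hA0def
  set A1 : Set Ω := {ω | T1₁ ω ≤ t} with hA1def
  have mI0 : MeasurableSet I0 := (hT1₀ measurableSet_Iic).union (hT2₀ measurableSet_Ioi)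
  have mI1 : MeasurableSet I1 := (hT1₁ measurableSet_Iic).union (hT2₁ measurableSet_Ioi)
  have mS : MeasurableSet S := mI0.inter mI1
  have hA0sub1 : A0 ⊆ {ω | T1₀ ω ≤ 1} := fun ω hω => le_trans hω ht1
  have hA0S : A0 ⊆ S := fun ω hω => ⟨Or.inl (le_trans hω ht1), hweakORP (hA0sub1 hω)⟩
  have hT01S : {ω | T1₀ ω ≤ 1} ⊆ S := fun ω hω => ⟨Or.inl hω, hweakORP hω⟩
  have hA1I1 : A1 ⊆ I1 := fun ω hω => Or.inl (le_trans hω ht1)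
  have e0 : μ (A0 ∩ S) = μ A0 := by rw [Set.inter_eq_left.mpr hA0S]
  have e1 : A1 ∩ S = A1 ∩ I0 := by
    rw [hSdef, Set.inter_comm I0 I1, ← Set.inter_assoc, Set.inter_eq_left.mpr hA1I1]
  have e2 : μ I0 ≤ μ (A1 ∩ I0) + μ {ω | t < T1₁ ω} := by
    have hsub : I0 ⊆ (A1 ∩ I0) ∪ {ω | t < T1₁ ω} := by
      intro ω hω
      by_cases h : T1₁ ω ≤ t
      · exact Or.inl ⟨h, hω⟩
      · exact Or.inr (lt_of_not_ge h)
    exact le_trans (measure_mono hsub) (measure_union_le _ _)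
  have e3 : μ I0 + μ I1 ≤ 1 + μ S := by
    have h := measure_union_add_inter (μ := μ) I0 mI1
    have h1 : μ (I0 ∪ I1) ≤ 1 := prob_le_one
    calc μ I0 + μ I1 = μ (I0 ∪ I1) + μ (I0 ∩ I1) := h.symm
      _ ≤ 1 + μ S := add_le_add h1 le_rfl
  have fin : ∀ (E : Set Ω), μ E ≠ ⊤ := fun E => measure_ne_top μ E
  have tr : ∀ {E F : Set Ω}, E ⊆ F → (μ E).toReal ≤ (μ F).toReal :=
    fun {E F} h => ENNReal.toReal_mono (fin F) (measure_mono h)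
  have r0 : (μ (A0 ∩ S)).toReal = (μ A0).toReal := by rw [e0]
  have r1a : (μ (A1 ∩ S)).toReal ≤ (μ A1).toReal := tr Set.inter_subset_left
  have r1b : (μ (A1 ∩ S)).toReal ≤ (μ I0).toReal := by
    rw [e1]; exact tr Set.inter_subset_right
  have r2 : (μ I0).toReal ≤ (μ (A1 ∩ S)).toReal + (μ {ω | t < T1₁ ω}).toReal := by
    rw [e1]
    have h := ENNReal.toReal_mono (by simp [fin]) e2
    rwa [ENNReal.toReal_add (fin _) (fin _)] at h
  have r3 : (μ I0).toReal + (μ I1).toReal ≤ 1 + (μ S).toReal := by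
    have h := ENNReal.toReal_mono (by simp [fin]) e3
    rwa [ENNReal.toReal_add (fin _) (fin _), ENNReal.toReal_add (by simp) (fin _),
      ENNReal.toReal_one] at h
  have r4 : (μ {ω | T1₀ ω ≤ 1}).toReal ≤ (μ S).toReal := tr hT01S
  have r5 : (μ S).toReal ≤ (μ I0).toReal := tr Set.inter_subset_left
  have r6 : (μ S).toReal ≤ (μ I1).toReal := tr Set.inter_subset_right
  have rnn : (0:ℝ) ≤ (μ ({ω | T1₀ ω ≤ 1} ∩ {ω | T2₀ ω ≤ 1})).toReal := ENNReal.toReal_nonneg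
  have rnn1 : (0:ℝ) ≤ (μ (A1 ∩ S)).toReal := ENNReal.toReal_nonneg
  have hLp : LPiTilde μ T1₀ T2₀ T1₁ T2₁ ≤ (μ S).toReal := by
    rw [LPiTilde]; exact max_le r4 (by linarith)
  have hpU : (μ S).toReal ≤ UPiTilde μ T1₀ T2₀ T1₁ T2₁ := by
    rw [UPiTilde]; exact le_min r5 (by linarith)
  have hppos : 0 < (μ S).toReal := lt_of_lt_of_le hLpos hLp
  have hUpos : 0 < UPiTilde μ T1₀ T2₀ T1₁ T2₁ := lt_of_lt_of_le hppos hpU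
  set N : ℝ := (μ (A1 ∩ S)).toReal - (μ A0).toReal with hNdef
  have hNu : N ≤ uTilde μ T1₀ T2₀ T1₁ t := by
    rw [uTilde, hNdef]
    have h : (μ (A1 ∩ S)).toReal ≤ min (μ A1).toReal (μ I0).toReal := le_min r1a r1b
    linarith
  have hlN : lTilde μ T1₀ T2₀ T1₁ t ≤ N := by
    rw [lTilde, hNdef]
    have h : max 0 ((μ I0).toReal - (μ {ω | t < T1₁ ω}).toReal) ≤ (μ (A1 ∩ S)).toReal :=
      max_le rnn1 (by linarith)
    linarith
  have hFICE : FICE μ T1₀ T2₀ T1₁ T2₁ t = N / (μ S).toReal := by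
    rw [FICE, condProbR, condProbR, hNdef, r0, sub_div]
  refine ⟨fun hu => ?_, fun hu => ?_, fun hl => ?_, fun hl => ?_⟩
  · rw [hFICE, div_le_div_iff₀ hppos hLpos]
    nlinarith [hNu, hLp, hu]
  · rw [hFICE, div_le_div_iff₀ hppos hUpos]
    nlinarith [hNu, hpU, hu]
  · rw [hFICE, div_le_div_iff₀ hUpos hppos]
    nlinarith [hlN, hpU, hl]
  · rw [hFICE, div_le_div_iff₀ hLpos hppos]
    nlinarith [hlN, hLp, hl]
end

section
/- (Proposition A1.) Without any order-preservation assumption, define for t ∈ [0,1]: u̇(t) = min{μ(T1₁ ≤ t), μ(ios₀)} − max{0, μ(ios₁) − μ(T1₀ > t)}, l̇(t) = max{0, μ(ios₀) − μ(T1₁ > t)} − min{μ(T1₀ ≤ t), μ(ios₁)}, L̇π = max{0, μ(ios₀) + μ(ios₁) − 1}, and U̇π = min{μ(ios₀), μ(ios₁)}. If L̇π > 0, then FICE(t) ≤ u̇(t)/L̇π when u̇(t) ≥ 0 and FICE(t) ≤ u̇(t)/U̇π when u̇(t) < 0; and FICE(t) ≥ l̇(t)/U̇π when l̇(t) ≥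 0 and FICE(t) ≥ l̇(t)/L̇π when l̇(t) < 0. -/
open MeasureTheory Set

/-- `u̇(t) = min{μ(T1₁ ≤ t), μ(ios₀)} − max{0, μ(ios₁) − μ(T1₀ > t)}`. -/
noncomputable def uDot {Ω : Type*} [MeasurableSpace Ω] (μ : Measure Ω)
    (T1₀ T2₀ T1₁ T2₁ : Ω → ℝ) (t : ℝ) : ℝ :=
  min (μ {ω | T1₁ ω ≤ t}).toReal (μ (iosEv T1₀ T2₀)).toReal
    - max 0 ((μ (iosEv T1₁ T2₁)).toReal - (μ {ω | t < T1₀ ω}).toReal)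

/-- `l̇(t) = max{0, μ(ios₀) − μ(T1₁ > t)} − min{μ(T1₀ ≤ t), μ(ios₁)}`. -/
noncomputable def lDot {Ω : Type*} [MeasurableSpace Ω] (μ : Measure Ω)
    (T1₀ T2₀ T1₁ T2₁ : Ω → ℝ) (t : ℝ) : ℝ :=
  max 0 ((μ (iosEv T1₀ T2₀)).toReal - (μ {ω | t < T1₁ ω}).toReal)
    - min (μ {ω | T1₀ ω ≤ t}).toReal (μ (iosEv T1₁ T2₁)).toReal

/-- `L̇π = max{0, μ(ios₀) + μ(ios₁) − 1}`. -/
noncomputable def LPiDot {Ω : Type*} [MeasurableSpace Ω] (μ : Measure Ω)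
    (T1₀ T2₀ T1₁ T2₁ : Ω → ℝ) : ℝ :=
  max 0 ((μ (iosEv T1₀ T2₀)).toReal + (μ (iosEv T1₁ T2₁)).toReal - 1)

/-- `U̇π = min{μ(ios₀), μ(ios₁)}`. -/
noncomputable def UPiDot {Ω : Type*} [MeasurableSpace Ω] (μ : Measure Ω)
    (T1₀ T2₀ T1₁ T2₁ : Ω → ℝ) : ℝ :=
  min (μ (iosEv T1₀ T2₀)).toReal (μ (iosEv T1₁ T2₁)).toReal

/-! Since `t ≤ 1`, `{T1_a ≤ t} ⊆ ios_a`, so `FICE(t)` is the ratio of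
`μ({T1₁ ≤ t} ∩ ios₀) − μ({T1₀ ≤ t} ∩ ios₁)` to `μ(ios₀ ∩ ios₁)`. Fréchet's bounds
`max 0 (μ A + μ B − 1) ≤ μ (A ∩ B) ≤ min (μ A) (μ B)` place the numerator in `[l̇(t), u̇(t)]`
and the denominator in `[L̇π, U̇π]`; dividing, the extreme denominator depends on the sign of the
numerator bound. -/

section RatioBounds

variable {x u p L U : ℝ}

lemma div_le_div_of_le_of_mem_Icc (hL : 0 < L) (hp : p ∈ Icc L U) (hxu : x ≤ u) :
    (0 ≤ u → x / p ≤ u / L) ∧ (u < 0 → x / p ≤ u / U) := by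
  have hp₀ : 0 < p := hL.trans_le hp.1
  have hxp : x / p ≤ u / p := div_le_div_of_nonneg_right hxu hp₀.le
  refine ⟨fun hu => hxp.trans (div_le_div_of_nonneg_left hu hL hp.1), fun hu => hxp.trans ?_⟩
  have := div_le_div_of_nonneg_left (neg_nonneg.mpr hu.le) hp₀ hp.2
  rwa [neg_div, neg_div, neg_le_neg_iff] at this

lemma div_le_div_of_ge_of_mem_Icc (hL : 0 < L) (hp : p ∈ Icc L U) (hux : u ≤ x) :
    (0 ≤ u → u / U ≤ x / p) ∧ (u < 0 → u / L ≤ x / p) := by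
  have h := div_le_div_of_le_of_mem_Icc hL hp (neg_le_neg hux)
  simp only [neg_div, neg_le_neg_iff, neg_nonneg, neg_neg_iff_pos] at h
  refine ⟨fun hu => ?_, fun hu => h.1 hu.le⟩
  rcases hu.eq_or_lt with rfl | hu
  · rw [zero_div]
    exact div_nonneg hux (hL.trans_le hp.1).le
  · exact h.2 hu

end RatioBounds

section FrechetBounds

variable {Ω : Type*} [MeasurableSpace Ω] {μ : Measure Ω}

lemma measureReal_inter_le_min [IsFiniteMeasure μ] (A B : Set Ω) :
    μ.real (A ∩ B) ≤ min (μ.real A) (μ.real B) :=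
  le_min (measureReal_mono inter_subset_left) (measureReal_mono inter_subset_right)

lemma max_zero_sub_measureReal_compl_le_inter [IsFiniteMeasure μ] (E S : Set Ω) :
    max 0 (μ.real S - μ.real Eᶜ) ≤ μ.real (E ∩ S) := by
  refine max_le measureReal_nonneg (sub_le_iff_le_add.mpr ?_)
  calc μ.real S ≤ μ.real ((E ∩ S) ∪ Eᶜ) := measureReal_mono fun ω hω => by
          by_cases h : ω ∈ E
          exacts [Or.inl ⟨h, hω⟩, Or.inr h]
    _ ≤ μ.real (E ∩ S) + μ.real Eᶜ := measureReal_union_le _ _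

lemma max_zero_add_sub_one_le_measureReal_inter [IsProbabilityMeasure μ] (A : Set Ω) {B : Set Ω}
    (hB : MeasurableSet B) : max 0 (μ.real A + μ.real B - 1) ≤ μ.real (A ∩ B) := by
  have h := max_zero_sub_measureReal_compl_le_inter (μ := μ) B A
  rwa [probReal_compl_eq_one_sub hB, inter_comm, sub_sub_eq_add_sub] at h

end FrechetBounds

section InfectedOrSurvivors

variable {Ω : Type*}

lemma setOf_le_subset_iosEv {T1 : Ω → ℝ} (T2 : Ω → ℝ) {t : ℝ} (ht : t ≤ 1) :
    {ω | T1 ω ≤ t} ⊆ iosEv T1 T2 :=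
  fun _ hω => Or.inl (le_trans hω ht)

lemma compl_setOf_le (T : Ω → ℝ) (t : ℝ) : {ω | T ω ≤ t}ᶜ = {ω | t < T ω} := by
  ext
  simp

lemma setOf_le_inter_ios_eq (T1₀ T2₀ T1₁ T2₁ : Ω → ℝ) {t : ℝ} (ht : t ≤ 1) :
    {ω | T1₁ ω ≤ t} ∩ (iosEv T1₀ T2₀ ∩ iosEv T1₁ T2₁) = {ω | T1₁ ω ≤ t} ∩ iosEv T1₀ T2₀ ∧
      {ω | T1₀ ω ≤ t} ∩ (iosEv T1₀ T2₀ ∩ iosEv T1₁ T2₁) = {ω | T1₀ ω ≤ t} ∩ iosEv T1₁ T2₁ := by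
  constructor
  · rw [inter_comm (iosEv T1₀ T2₀), ← inter_assoc,
      inter_eq_left.mpr (setOf_le_subset_iosEv T2₁ ht)]
  · rw [← inter_assoc, inter_eq_left.mpr (setOf_le_subset_iosEv T2₀ ht)]

variable [MeasurableSpace Ω]

lemma measurableSet_iosEv {T1 T2 : Ω → ℝ} (hT1 : Measurable T1) (hT2 : Measurable T2) :
    MeasurableSet (iosEv T1 T2) :=
  (measurableSet_le hT1 measurable_const).union (measurableSet_lt measurable_const hT2)

variable {μ : Measure Ω} [IsFiniteMeasure μ] (T1₀ T2₀ T1₁ T2₁ : Ω → ℝ) {t : ℝ}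

lemma measureReal_setOf_le_inter_ios_sub_le_uDot (ht : t ≤ 1) :
    μ.real ({ω | T1₁ ω ≤ t} ∩ (iosEv T1₀ T2₀ ∩ iosEv T1₁ T2₁))
      - μ.real ({ω | T1₀ ω ≤ t} ∩ (iosEv T1₀ T2₀ ∩ iosEv T1₁ T2₁))
      ≤ uDot μ T1₀ T2₀ T1₁ T2₁ t := by
  obtain ⟨h₁, h₀⟩ := setOf_le_inter_ios_eq T1₀ T2₀ T1₁ T2₁ ht
  have h₀_ge := max_zero_sub_measureReal_compl_le_inter (μ := μ) {ω | T1₀ ω ≤ t} (iosEv T1₁ T2₁)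
  rw [compl_setOf_le] at h₀_ge
  rw [h₁, h₀]
  exact sub_le_sub (measureReal_inter_le_min _ _) h₀_ge

lemma lDot_le_measureReal_setOf_le_inter_ios_sub (ht : t ≤ 1) :
    lDot μ T1₀ T2₀ T1₁ T2₁ t
      ≤ μ.real ({ω | T1₁ ω ≤ t} ∩ (iosEv T1₀ T2₀ ∩ iosEv T1₁ T2₁))
        - μ.real ({ω | T1₀ ω ≤ t} ∩ (iosEv T1₀ T2₀ ∩ iosEv T1₁ T2₁)) := by
  obtain ⟨h₁, h₀⟩ := setOf_le_inter_ios_eq T1₀ T2₀ T1₁ T2₁ ht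
  have h₁_ge := max_zero_sub_measureReal_compl_le_inter (μ := μ) {ω | T1₁ ω ≤ t} (iosEv T1₀ T2₀)
  rw [compl_setOf_le] at h₁_ge
  rw [h₁, h₀]
  exact sub_le_sub h₁_ge (measureReal_inter_le_min _ _)

end InfectedOrSurvivors

theorem FICE_bounds_no_orp_general
    {Ω : Type*} [MeasurableSpace Ω] (μ : Measure Ω) [IsProbabilityMeasure μ]
    (T1₀ T2₀ T1₁ T2₁ : Ω → ℝ)
    (hT1₁ : Measurable T1₁) (hT2₁ : Measurable T2₁)
    (t : ℝ) (ht1 : t ≤ 1)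
    (hLpos : 0 < LPiDot μ T1₀ T2₀ T1₁ T2₁) :
    (0 ≤ uDot μ T1₀ T2₀ T1₁ T2₁ t →
      FICE μ T1₀ T2₀ T1₁ T2₁ t ≤ uDot μ T1₀ T2₀ T1₁ T2₁ t / LPiDot μ T1₀ T2₀ T1₁ T2₁) ∧
    (uDot μ T1₀ T2₀ T1₁ T2₁ t < 0 →
      FICE μ T1₀ T2₀ T1₁ T2₁ t ≤ uDot μ T1₀ T2₀ T1₁ T2₁ t / UPiDot μ T1₀ T2₀ T1₁ T2₁) ∧
    (0 ≤ lDot μ T1₀ T2₀ T1₁ T2₁ t →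
      lDot μ T1₀ T2₀ T1₁ T2₁ t / UPiDot μ T1₀ T2₀ T1₁ T2₁ ≤ FICE μ T1₀ T2₀ T1₁ T2₁ t) ∧
    (lDot μ T1₀ T2₀ T1₁ T2₁ t < 0 →
      lDot μ T1₀ T2₀ T1₁ T2₁ t / LPiDot μ T1₀ T2₀ T1₁ T2₁ ≤ FICE μ T1₀ T2₀ T1₁ T2₁ t) := by
  have hios : μ.real (iosEv T1₀ T2₀ ∩ iosEv T1₁ T2₁)
      ∈ Icc (LPiDot μ T1₀ T2₀ T1₁ T2₁) (UPiDot μ T1₀ T2₀ T1₁ T2₁) :=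
    ⟨max_zero_add_sub_one_le_measureReal_inter _ (measurableSet_iosEv hT1₁ hT2₁),
      measureReal_inter_le_min _ _⟩
  have hFICE : FICE μ T1₀ T2₀ T1₁ T2₁ t
      = (μ.real ({ω | T1₁ ω ≤ t} ∩ (iosEv T1₀ T2₀ ∩ iosEv T1₁ T2₁))
          - μ.real ({ω | T1₀ ω ≤ t} ∩ (iosEv T1₀ T2₀ ∩ iosEv T1₁ T2₁)))
        / μ.real (iosEv T1₀ T2₀ ∩ iosEv T1₁ T2₁) :=
    (sub_div _ _ _).symm
  obtain ⟨hu_nonneg, hu_neg⟩ := div_le_div_of_le_of_mem_Icc hLpos hios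
    (measureReal_setOf_le_inter_ios_sub_le_uDot (μ := μ) T1₀ T2₀ T1₁ T2₁ ht1)
  obtain ⟨hl_nonneg, hl_neg⟩ := div_le_div_of_ge_of_mem_Icc hLpos hios
    (lDot_le_measureReal_setOf_le_inter_ios_sub (μ := μ) T1₀ T2₀ T1₁ T2₁ ht1)
  rw [hFICE]
  exact ⟨hu_nonneg, hu_neg, hl_nonneg, hl_neg⟩

/-- Proposition A1: FICE bounds without any ORP assumption. -/
theorem FICE_bounds_no_orp
    {Ω : Type*} [MeasurableSpace Ω] (μ : Measure Ω) [IsProbabilityMeasure μ]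
    (T1₀ T2₀ T1₁ T2₁ : Ω → ℝ)
    (hT1₀ : Measurable T1₀) (hT2₀ : Measurable T2₀)
    (hT1₁ : Measurable T1₁) (hT2₁ : Measurable T2₁)
    (t : ℝ) (ht0 : 0 ≤ t) (ht1 : t ≤ 1)
    (hLpos : 0 < LPiDot μ T1₀ T2₀ T1₁ T2₁) :
    (0 ≤ uDot μ T1₀ T2₀ T1₁ T2₁ t →
      FICE μ T1₀ T2₀ T1₁ T2₁ t ≤ uDot μ T1₀ T2₀ T1₁ T2₁ t / LPiDot μ T1₀ T2₀ T1₁ T2₁) ∧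
    (uDot μ T1₀ T2₀ T1₁ T2₁ t < 0 →
      FICE μ T1₀ T2₀ T1₁ T2₁ t ≤ uDot μ T1₀ T2₀ T1₁ T2₁ t / UPiDot μ T1₀ T2₀ T1₁ T2₁) ∧
    (0 ≤ lDot μ T1₀ T2₀ T1₁ T2₁ t →
      lDot μ T1₀ T2₀ T1₁ T2₁ t / UPiDot μ T1₀ T2₀ T1₁ T2₁ ≤ FICE μ T1₀ T2₀ T1₁ T2₁ t) ∧
    (lDot μ T1₀ T2₀ T1₁ T2₁ t < 0 →
      lDot μ T1₀ T2₀ T1₁ T2₁ t / LPiDot μ T1₀ T2₀ T1₁ T2₁ ≤ FICE μ T1₀ T2₀ T1₁ T2₁ t) :=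
  FICE_bounds_no_orp_general μ T1₀ T2₀ T1₁ T2₁ hT1₁ hT2₁ t ht1 hLpos
end

section
/- (Proposition A2.) Under the weak-ORP assumption ({T1₀ ≤ 1} ⊆ ios₁), if μ(ios) > 0 and μ(T1₀ ≤ t) > 0, then for every t ∈ [0,1] the risk-ratio scale FICE satisfies max{0, μ(ios₀) − μ(T1₁ > t)} / μ(T1₀ ≤ t) ≤ μ({T1₁ ≤ t} | ios) / μ({T1₀ ≤ t} | ios) ≤ min{μ(ios₀), μ(T1₁ ≤ t)} / μ(T1₀ ≤ t). -/
open MeasureTheory Set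

/-- Proposition A2: risk-ratio scale FICE bounds under weak-ORP. If `μ(ios) > 0` and
`μ(T1₀ ≤ t) > 0`, then for every `t ∈ [0,1]`,
`max{0, μ(ios₀) − μ(T1₁ > t)}/μ(T1₀ ≤ t) ≤ μ({T1₁ ≤ t}|ios)/μ({T1₀ ≤ t}|ios)
  ≤ min{μ(ios₀), μ(T1₁ ≤ t)}/μ(T1₀ ≤ t)`. -/
theorem FICE_risk_ratio_bounds_weak_orp
    {Ω : Type*} [MeasurableSpace Ω] (μ : Measure Ω) [IsProbabilityMeasure μ]
    (T1₀ T2₀ T1₁ T2₁ : Ω → ℝ)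
    (hT1₀ : Measurable T1₀) (hT2₀ : Measurable T2₀)
    (hT1₁ : Measurable T1₁) (hT2₁ : Measurable T2₁)
    (hweakORP : {ω | T1₀ ω ≤ 1} ⊆ iosEv T1₁ T2₁)
    (t : ℝ) (ht0 : 0 ≤ t) (ht1 : t ≤ 1)
    (hios : 0 < μ (iosEv T1₀ T2₀ ∩ iosEv T1₁ T2₁))
    (hF0 : 0 < (μ {ω | T1₀ ω ≤ t}).toReal) :
    (max 0 ((μ (iosEv T1₀ T2₀)).toReal - (μ {ω | t < T1₁ ω}).toReal)
        / (μ {ω | T1₀ ω ≤ t}).toReal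
      ≤ condProbR μ {ω | T1₁ ω ≤ t} (iosEv T1₀ T2₀ ∩ iosEv T1₁ T2₁)
          / condProbR μ {ω | T1₀ ω ≤ t} (iosEv T1₀ T2₀ ∩ iosEv T1₁ T2₁)) ∧
    (condProbR μ {ω | T1₁ ω ≤ t} (iosEv T1₀ T2₀ ∩ iosEv T1₁ T2₁)
          / condProbR μ {ω | T1₀ ω ≤ t} (iosEv T1₀ T2₀ ∩ iosEv T1₁ T2₁)
      ≤ min (μ (iosEv T1₀ T2₀)).toReal (μ {ω | T1₁ ω ≤ t}).toReal
          / (μ {ω | T1₀ ω ≤ t}).toReal) := by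
  set ios := iosEv T1₀ T2₀ ∩ iosEv T1₁ T2₁ with hiosdef
  have hsub0 : {ω | T1₀ ω ≤ t} ⊆ ios := by
    intro ω h
    have h1 : T1₀ ω ≤ 1 := le_trans h ht1
    exact ⟨Or.inl h1, hweakORP h1⟩
  have hE0 : {ω | T1₀ ω ≤ t} ∩ ios = {ω | T1₀ ω ≤ t} := inter_eq_left.mpr hsub0
  have hE1 : {ω | T1₁ ω ≤ t} ∩ ios = {ω | T1₁ ω ≤ t} ∩ iosEv T1₀ T2₀ := by
    ext ω
    constructor
    · rintro ⟨h1, h2, _⟩; exact ⟨h1, h2⟩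
    · rintro ⟨h1, h2⟩
      exact ⟨h1, h2, Or.inl (le_trans h1 ht1)⟩
  have hne : ∀ s : Set Ω, μ s ≠ ⊤ := fun s => measure_ne_top μ s
  have hiosR : 0 < (μ ios).toReal := ENNReal.toReal_pos hios.ne' (hne _)
  set a := (μ ({ω | T1₁ ω ≤ t} ∩ iosEv T1₀ T2₀)).toReal with ha
  set b := (μ {ω | T1₀ ω ≤ t}).toReal with hb
  have hratio : condProbR μ {ω | T1₁ ω ≤ t} ios / condProbR μ {ω | T1₀ ω ≤ t} ios
      = a / b := by
    rw [condProbR, condProbR, hE0, hE1, div_div_div_cancel_right₀]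
    exact hiosR.ne'
  have ha_le_c : a ≤ (μ (iosEv T1₀ T2₀)).toReal :=
    ENNReal.toReal_mono (hne _) (measure_mono inter_subset_right)
  have ha_le_d : a ≤ (μ {ω | T1₁ ω ≤ t}).toReal :=
    ENNReal.toReal_mono (hne _) (measure_mono inter_subset_left)
  have hlower : (μ (iosEv T1₀ T2₀)).toReal - (μ {ω | t < T1₁ ω}).toReal ≤ a := by
    have hsub : iosEv T1₀ T2₀ ⊆ ({ω | T1₁ ω ≤ t} ∩ iosEv T1₀ T2₀) ∪ {ω | t < T1₁ ω} := by
      intro ω h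
      rcases le_or_gt (T1₁ ω) t with h' | h'
      · exact Or.inl ⟨h', h⟩
      · exact Or.inr h'
    have := (measure_mono hsub).trans (measure_union_le (μ := μ) _ _)
    have h2 : (μ (iosEv T1₀ T2₀)).toReal ≤ a + (μ {ω | t < T1₁ ω}).toReal := by
      calc (μ (iosEv T1₀ T2₀)).toReal
          ≤ (μ ({ω | T1₁ ω ≤ t} ∩ iosEv T1₀ T2₀) + μ {ω | t < T1₁ ω}).toReal :=
            ENNReal.toReal_mono (ENNReal.add_ne_top.mpr ⟨hne _, hne _⟩) this
        _ = a + (μ {ω | t < T1₁ ω}).toReal := ENNReal.toReal_add (hne _) (hne _)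
    linarith
  have ha0 : 0 ≤ a := ENNReal.toReal_nonneg
  constructor
  · rw [hratio]
    have : max 0 ((μ (iosEv T1₀ T2₀)).toReal - (μ {ω | t < T1₁ ω}).toReal) ≤ a :=
      max_le ha0 hlower
    gcongr
  · rw [hratio]
    gcongr
    exact le_min ha_le_c ha_le_d
end

section
/- (Proposition A3.) Without any order-preservation assumption, if μ(ios) > 0, min{μ(ios₁), μ(T1₀ ≤ t)} > 0 and μ(ios₁) − μ(T1₀ > t) > 0, then for every t ∈ [0,1] the risk-ratio scale FICE satisfies max{0, μ(ios₀) − μ(T1₁ > t)} / min{μ(ios₁), μ(T1₀ ≤ t)} ≤ μ({T1₁ ≤ t} | ios) / μ({T1₀ ≤ t} | ios) ≤ min{μ(T1₁ ≤ t), μ(ios₀)} / max{0, μ(ios₁) − μ(T1₀ > t)}. -/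
open MeasureTheory Set

/-- Proposition A3: risk-ratio scale FICE bounds without any ORP assumption.
If `μ(ios) > 0`, `min{μ(ios₁), μ(T1₀ ≤ t)} > 0` and `μ(ios₁) − μ(T1₀ > t) > 0`,
then for every `t ∈ [0,1]`,
`max{0, μ(ios₀) − μ(T1₁ > t)}/min{μ(ios₁), μ(T1₀ ≤ t)}
   ≤ μ({T1₁ ≤ t}|ios)/μ({T1₀ ≤ t}|ios)
   ≤ min{μ(T1₁ ≤ t), μ(ios₀)}/max{0, μ(ios₁) − μ(T1₀ > t)}`. -/
theorem FICE_risk_ratio_bounds_no_orp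
    {Ω : Type*} [MeasurableSpace Ω] (μ : Measure Ω) [IsProbabilityMeasure μ]
    (T1₀ T2₀ T1₁ T2₁ : Ω → ℝ)
    (hT1₀ : Measurable T1₀) (hT2₀ : Measurable T2₀)
    (hT1₁ : Measurable T1₁) (hT2₁ : Measurable T2₁)
    (t : ℝ) (ht0 : 0 ≤ t) (ht1 : t ≤ 1)
    (hios : 0 < μ (iosEv T1₀ T2₀ ∩ iosEv T1₁ T2₁))
    (hden1 : 0 < min (μ (iosEv T1₁ T2₁)).toReal (μ {ω | T1₀ ω ≤ t}).toReal)
    (hden2 : 0 < (μ (iosEv T1₁ T2₁)).toReal - (μ {ω | t < T1₀ ω}).toReal) :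
    (max 0 ((μ (iosEv T1₀ T2₀)).toReal - (μ {ω | t < T1₁ ω}).toReal)
        / min (μ (iosEv T1₁ T2₁)).toReal (μ {ω | T1₀ ω ≤ t}).toReal
      ≤ condProbR μ {ω | T1₁ ω ≤ t} (iosEv T1₀ T2₀ ∩ iosEv T1₁ T2₁)
          / condProbR μ {ω | T1₀ ω ≤ t} (iosEv T1₀ T2₀ ∩ iosEv T1₁ T2₁)) ∧
    (condProbR μ {ω | T1₁ ω ≤ t} (iosEv T1₀ T2₀ ∩ iosEv T1₁ T2₁)
          / condProbR μ {ω | T1₀ ω ≤ t} (iosEv T1₀ T2₀ ∩ iosEv T1₁ T2₁)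
      ≤ min (μ {ω | T1₁ ω ≤ t}).toReal (μ (iosEv T1₀ T2₀)).toReal
          / max 0 ((μ (iosEv T1₁ T2₁)).toReal - (μ {ω | t < T1₀ ω}).toReal)) := by
  classical
  set S := iosEv T1₀ T2₀ ∩ iosEv T1₁ T2₁ with hS
  set A := {ω | T1₁ ω ≤ t} with hA
  set B := {ω | T1₀ ω ≤ t} with hB
  -- set inclusions
  have hAsub : A ⊆ iosEv T1₁ T2₁ := fun ω h => Or.inl (le_trans h ht1)
  have hBsub : B ⊆ iosEv T1₀ T2₀ := fun ω h => Or.inl (le_trans h ht1)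
  have hnum_lb_set : iosEv T1₀ T2₀ ⊆ (A ∩ S) ∪ {ω | t < T1₁ ω} := by
    intro ω hω
    by_cases h : T1₁ ω ≤ t
    · exact Or.inl ⟨h, hω, hAsub h⟩
    · exact Or.inr (lt_of_not_ge h)
  have hden_lb_set : iosEv T1₁ T2₁ ⊆ (B ∩ S) ∪ {ω | t < T1₀ ω} := by
    intro ω hω
    by_cases h : T1₀ ω ≤ t
    · exact Or.inl ⟨h, hBsub h, hω⟩
    · exact Or.inr (lt_of_not_ge h)
  -- real-valued measures
  have hfin : ∀ E : Set Ω, μ E ≠ ⊤ := fun E => measure_ne_top μ E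
  have toReal_mono : ∀ {E F : Set Ω}, E ⊆ F → (μ E).toReal ≤ (μ F).toReal := by
    intro E F h
    exact ENNReal.toReal_mono (hfin F) (measure_mono h)
  have toReal_union : ∀ E F : Set Ω, (μ (E ∪ F)).toReal ≤ (μ E).toReal + (μ F).toReal := by
    intro E F
    rw [← ENNReal.toReal_add (hfin E) (hfin F)]
    exact ENNReal.toReal_mono (by finiteness) (measure_union_le E F)
  have hnum_lb : (μ (iosEv T1₀ T2₀)).toReal - (μ {ω | t < T1₁ ω}).toReal ≤ (μ (A ∩ S)).toReal := by
    have := le_trans (toReal_mono hnum_lb_set) (toReal_union _ _)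
    linarith
  have hden_lb : (μ (iosEv T1₁ T2₁)).toReal - (μ {ω | t < T1₀ ω}).toReal ≤ (μ (B ∩ S)).toReal := by
    have := le_trans (toReal_mono hden_lb_set) (toReal_union _ _)
    linarith
  have hnum_ub : (μ (A ∩ S)).toReal ≤ min (μ A).toReal (μ (iosEv T1₀ T2₀)).toReal :=
    le_min (toReal_mono inter_subset_left)
      (toReal_mono (fun ω h => h.2.1))
  have hden_ub : (μ (B ∩ S)).toReal ≤ min (μ (iosEv T1₁ T2₁)).toReal (μ B).toReal :=
    le_min (toReal_mono (fun ω h => h.2.2))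
      (toReal_mono inter_subset_left)
  have hspos : 0 < (μ S).toReal := ENNReal.toReal_pos hios.ne' (hfin S)
  have hbpos : 0 < (μ (B ∩ S)).toReal := lt_of_lt_of_le hden2 hden_lb
  have hratio : condProbR μ A S / condProbR μ B S = (μ (A ∩ S)).toReal / (μ (B ∩ S)).toReal := by
    unfold condProbR
    rw [div_div_div_cancel_right₀]
    exact hspos.ne'
  constructor
  · rw [hratio]
    rcases le_or_gt ((μ (iosEv T1₀ T2₀)).toReal - (μ {ω | t < T1₁ ω}).toReal) 0 with h | h
    · rw [max_eq_left h, zero_div]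
      positivity
    · rw [max_eq_right h.le]
      exact div_le_div₀ ENNReal.toReal_nonneg hnum_lb hbpos (le_trans hden_ub (le_refl _))
  · rw [hratio]
    rw [max_eq_right hden2.le]
    exact div_le_div₀ (le_min ENNReal.toReal_nonneg ENNReal.toReal_nonneg) hnum_ub hden2 hden_lb
end

section
/- (Conditional-exchangeability identification step.) Let m be a sub-σ-algebra of 𝓕, let A : Ω → {0,1} be a measurable treatment indicator, let T1₀, T1₁ : Ω → ℝ be measurable, and let T1 be the observed time defined by consistency, T1(ω) = T1₀(ω) if A(ω) = 0 and T1(ω) = T1₁(ω) if A(ω) = 1. Fix a ∈ {0,1} and suppose A is conditionally independent of T1_a given m, and that μ⟦{A = a} | m⟧ > 0 almost everywhere. Then for every t, μ(T1_a ≤ t) = E[ μ⟦{T1 ≤ t} ∩ {A = a} | m⟧ / μ⟦{A = a} | m⟧ ], i.e., the counterfactual probability equals the expectation over m of the conditional probability of the observed event {T1 ≤ t} among units with A = a. -/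
open MeasureTheory Set ProbabilityTheory
open scoped ProbabilityTheory

/-- Conditional-exchangeability identification step: with treatment `A : Ω → Fin 2`,
potential outcomes `T1f 0, T1f 1`, observed outcome `T1 ω = T1f (A ω) ω` (consistency),
if `A` is conditionally independent of `T1f a` given `m` and `μ⟦{A = a}|m⟧ > 0` a.e.,
then `μ(T1f a ≤ t) = E[ μ⟦{T1 ≤ t} ∩ {A = a}|m⟧ / μ⟦{A = a}|m⟧ ]` for every `t`. -/
theorem counterfactual_identification_conditional_exchangeability
    {Ω : Type*} (m : MeasurableSpace Ω) {mΩ : MeasurableSpace Ω} [StandardBorelSpace Ω] [Nonempty Ω]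
    (μ : Measure Ω) [IsProbabilityMeasure μ]
    (hm : m ≤ mΩ)
    (A : Ω → Fin 2) (hA : Measurable A)
    (T1f : Fin 2 → Ω → ℝ) (hT1f : ∀ a, Measurable (T1f a))
    (T1 : Ω → ℝ) (hcons : ∀ ω, T1 ω = T1f (A ω) ω)
    (a : Fin 2)
    (hCE : CondIndepFun m hm A (T1f a) μ)
    (hApos : ∀ᵐ ω ∂μ, 0 < (μ⟦{ω' | A ω' = a} | m⟧) ω) :
    ∀ t : ℝ,
      (μ {ω | T1f a ω ≤ t}).toReal
        = ∫ ω, (μ⟦{ω' | T1 ω' ≤ t} ∩ {ω' | A ω' = a} | m⟧) ω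
            / (μ⟦{ω' | A ω' = a} | m⟧) ω ∂μ := by
  intro t
  set E : Set Ω := {ω | T1f a ω ≤ t} with hE
  set As : Set Ω := {ω' | A ω' = a} with hAs
  have hA' : @Measurable Ω (Fin 2) mΩ _ A := hA
  have hT1f' : @Measurable Ω ℝ mΩ _ (T1f a) := (hT1f a)
  have hEmeas : MeasurableSet[mΩ] E := hT1f' measurableSet_Iic
  -- consistency: on {A = a}, T1 = T1f a
  have hset : {ω' | T1 ω' ≤ t} ∩ As = As ∩ E := by
    ext ω
    constructor
    · rintro ⟨h1, h2⟩
      have h2' : A ω = a := h2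
      refine ⟨h2', ?_⟩
      have h1' : T1 ω ≤ t := h1
      rw [hcons ω, h2'] at h1'
      exact h1'
    · rintro ⟨h2, h1⟩
      have h2' : A ω = a := h2
      refine ⟨?_, h2'⟩
      show T1 ω ≤ t
      rw [hcons ω, h2']
      exact h1
  -- conditional independence factorization
  have hfac : (μ⟦As ∩ E | m⟧) =ᵐ[μ]
      fun ω ↦ (μ⟦As | m⟧) ω * (μ⟦E | m⟧) ω := by
    have := (@condIndepFun_iff_condExp_inter_preimage_eq_mul Ω (Fin 2) ℝ m mΩ _ hm μ _
      A (T1f a) _ _ hA' hT1f').mp hCE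
      {a} (Set.Iic t) (measurableSet_singleton a) measurableSet_Iic
    have hAs' : A ⁻¹' {a} = As := by ext ω; simp [hAs]
    have hE' : T1f a ⁻¹' (Set.Iic t) = E := by ext ω; simp [hE]
    rwa [hAs', hE'] at this
  -- the integrand equals μ⟦E|m⟧ a.e.
  have hae : (fun ω ↦ (μ⟦{ω' | T1 ω' ≤ t} ∩ As | m⟧) ω / (μ⟦As | m⟧) ω)
      =ᵐ[μ] (μ⟦E | m⟧) := by
    have h1 : (μ⟦{ω' | T1 ω' ≤ t} ∩ As | m⟧) =ᵐ[μ] (μ⟦As ∩ E | m⟧) := by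
      rw [hset]
    filter_upwards [h1, hfac, hApos] with ω h1 h2 h3
    rw [h1, h2]
    field_simp
  rw [integral_congr_ae hae, integral_condExp hm]
  exact (@integral_indicator_one Ω mΩ μ E hEmeas).symm
end
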